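/- arXiv:math/0101243 — 2 statements merged into one kernel-verified Lean document; each statement's English description precedes it below -/
import Mathlib

section
/- Let θ ∈ L¹(ℝ²) ∩ L²(ℝ²) ∩ L^∞(ℝ²) and define ψ(x) = −∫_{ℝ²} θ(y)/|x−y| dy. Then there is a constant M, depending only on ‖θ‖_{L¹}, ‖θ‖_{L²} and ‖θ‖_{L^∞}, such that for all z₁, z₂ ∈ ℝ² with 0 < |z₁ − z₂| ≤ 1/2, one has |ψ(z₁) − ψ(z₂)| ≤ M |z₁ − z₂| · |log|z₁ − z₂||. -/
open MeasureTheory Measure Metric Set ENNReal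

section aux

variable {E : Type*} [NormedAddCommGroup E] [NormedSpace ℝ E] [MeasurableSpace E]
  [BorelSpace E] [Nontrivial E] [FiniteDimensional ℝ E]

lemma lintegral_fun_norm_addHaar_aux (μ : Measure E) [μ.IsAddHaarMeasure]
    (f : ℝ → ℝ≥0∞) (hf : Measurable f) :
    ∫⁻ x, f ‖x‖ ∂μ
      = μ.toSphere univ
        * ∫⁻ y in Ioi (0:ℝ), ENNReal.ofReal (y ^ (Module.finrank ℝ E - 1)) * f y :=
  calc
    ∫⁻ x, f ‖x‖ ∂μ = ∫⁻ x : ({(0:E)}ᶜ : Set E), f ‖(x : E)‖ ∂(μ.comap (↑)) := by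
      rw [lintegral_subtype_comap (measurableSet_singleton _).compl fun x ↦ f ‖x‖,
        restrict_compl_singleton]
    _ = ∫⁻ p : sphere (0:E) 1 × Ioi (0:ℝ), f p.2
          ∂(μ.toSphere.prod (volumeIoiPow (Module.finrank ℝ E - 1))) :=
      Eq.trans (by simp [homeomorphUnitSphereProd]) (μ.measurePreserving_homeomorphUnitSphereProd.lintegral_comp_emb
        (Homeomorph.measurableEmbedding _) (fun p ↦ f p.2))
    _ = μ.toSphere univ * ∫⁻ y : Ioi (0:ℝ), f y ∂(volumeIoiPow (Module.finrank ℝ E - 1)) := by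
      rw [lintegral_prod (fun p : ↑(sphere (0:E) 1) × ↑(Ioi (0:ℝ)) ↦ f p.2) (by fun_prop)]
      simp [lintegral_const, mul_comm]
    _ = _ := by
      rw [Measure.volumeIoiPow,
        lintegral_withDensity_eq_lintegral_mul _
          ((measurable_subtype_coe.pow_const _).ennreal_ofReal)
          (g := fun y : Ioi (0:ℝ) ↦ f y) (by fun_prop),
        ← lintegral_subtype_comap measurableSet_Ioi
          (fun y : ℝ ↦ ENNReal.ofReal (y ^ (Module.finrank ℝ E - 1)) * f y)]
      rfl

end aux

local notation "E2" => EuclideanSpace ℝ (Fin 2)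

lemma lint_E2 (f : ℝ → ℝ≥0∞) (hf : Measurable f) :
    ∫⁻ x : E2, f ‖x‖
      = (volume : Measure E2).toSphere univ * ∫⁻ y in Ioi (0:ℝ), ENNReal.ofReal y * f y := by
  have h := lintegral_fun_norm_addHaar_aux (volume : Measure E2) f hf
  simpa [finrank_euclideanSpace_fin] using h

lemma lint_inv_ball {R : ℝ} (hR : 0 < R) :
    ∫⁻ v : E2, (Iio R).indicator (fun t ↦ ENNReal.ofReal t⁻¹) ‖v‖
      = (volume : Measure E2).toSphere univ * ENNReal.ofReal R := by
  rw [lint_E2 _ (Measurable.indicator (by fun_prop) measurableSet_Iio)]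
  congr 1
  calc
    ∫⁻ y in Ioi (0:ℝ), ENNReal.ofReal y * (Iio R).indicator (fun t ↦ ENNReal.ofReal t⁻¹) y
        = ∫⁻ y in Ioi (0:ℝ), (Ioo (0:ℝ) R).indicator (fun _ ↦ 1) y := by
      refine setLIntegral_congr_fun measurableSet_Ioi (fun y hy ↦ ?_)
      rcases lt_or_ge y R with h | h
      · rw [indicator_of_mem (by exact h) (fun t ↦ ENNReal.ofReal t⁻¹),
          indicator_of_mem (by exact ⟨hy, h⟩), ← ENNReal.ofReal_mul (le_of_lt hy),
          mul_inv_cancel₀ (ne_of_gt hy), ENNReal.ofReal_one]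
      · rw [indicator_of_notMem (by exact not_lt.2 h) (fun t ↦ ENNReal.ofReal t⁻¹),
          indicator_of_notMem (fun hc ↦ absurd hc.2 (not_lt.2 h)), mul_zero]
    _ = ENNReal.ofReal R := by
      rw [lintegral_indicator measurableSet_Ioo, setLIntegral_one,
        Measure.restrict_apply measurableSet_Ioo,
        inter_eq_left.mpr (fun y hy ↦ hy.1), Real.volume_Ioo, sub_zero]

lemma lint_inv_sq_annulus {a b : ℝ} (ha : 0 < a) (hab : a ≤ b) :
    ∫⁻ v : E2, (Icc a b).indicator (fun t ↦ ENNReal.ofReal (t⁻¹ * t⁻¹)) ‖v‖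
      = (volume : Measure E2).toSphere univ * ENNReal.ofReal (Real.log b - Real.log a) := by
  rw [lint_E2 _ (Measurable.indicator (by fun_prop) measurableSet_Icc)]
  congr 1
  calc
    ∫⁻ y in Ioi (0:ℝ), ENNReal.ofReal y * (Icc a b).indicator (fun t ↦ ENNReal.ofReal (t⁻¹ * t⁻¹)) y
        = ∫⁻ y in Ioi (0:ℝ), (Icc a b).indicator (fun t ↦ ENNReal.ofReal t⁻¹) y := by
      refine setLIntegral_congr_fun measurableSet_Ioi (fun y hy ↦ ?_)
      by_cases h : y ∈ Icc a b
      · rw [indicator_of_mem h (fun t ↦ ENNReal.ofReal (t⁻¹ * t⁻¹)),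
          indicator_of_mem h (fun t ↦ ENNReal.ofReal t⁻¹), ← ENNReal.ofReal_mul (le_of_lt hy)]
        congr 1
        field_simp
      · rw [indicator_of_notMem h, indicator_of_notMem h, mul_zero]
    _ = ∫⁻ y in Icc a b, ENNReal.ofReal y⁻¹ := by
      rw [lintegral_indicator measurableSet_Icc, Measure.restrict_restrict measurableSet_Icc]
      congr 2
      exact inter_eq_left.mpr fun y hy ↦ lt_of_lt_of_le ha hy.1
    _ = ENNReal.ofReal (Real.log b - Real.log a) := by
      have hInt : IntegrableOn (fun y : ℝ ↦ y⁻¹) (Icc a b) := by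
        refine ContinuousOn.integrableOn_compact isCompact_Icc ?_
        exact ContinuousOn.inv₀ continuousOn_id fun y hy ↦ (lt_of_lt_of_le ha hy.1).ne'
      rw [← ofReal_integral_eq_lintegral_ofReal hInt ?nn]
      case nn =>
        filter_upwards [ae_restrict_mem measurableSet_Icc] with y hy
        exact inv_nonneg.2 (le_of_lt (lt_of_lt_of_le ha hy.1))
      congr 1
      rw [integral_Icc_eq_integral_Ioc, ← intervalIntegral.integral_of_le hab,
        integral_inv (by
          rw [uIcc_of_le hab]
          exact fun hc ↦ absurd hc.1 (not_le.2 ha)), Real.log_div (by linarith) (by linarith)]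

lemma lint_translate (g : ℝ → ℝ≥0∞) (z : E2) :
    ∫⁻ y : E2, g ‖y - z‖ = ∫⁻ v : E2, g ‖v‖ := by
  simpa [sub_eq_add_neg] using lintegral_add_right_eq_self (fun v : E2 ↦ g ‖v‖) (-z)

lemma kernel_integrable (θ : E2 → ℝ) (hθ : Integrable θ volume) (Ce : ℝ≥0∞) (hCtop : Ce ≠ ⊤)
    (hC : ∀ᵐ y, (‖θ y‖₊ : ℝ≥0∞) ≤ Ce) (x : E2) :
    Integrable (fun y ↦ θ y / dist x y) := by
  constructor
  · simp only [div_eq_mul_inv]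
    exact hθ.1.mul (Measurable.aestronglyMeasurable
      (((continuous_const.dist continuous_id).measurable).inv))
  · have hbound : ∀ᵐ y, (‖θ y / dist x y‖₊ : ℝ≥0∞)
        ≤ Ce * (Iio (1:ℝ)).indicator (fun t ↦ ENNReal.ofReal t⁻¹) ‖y - x‖ + ‖θ y‖₊ := by
      filter_upwards [hC] with y hy
      have hxy : dist x y = ‖y - x‖ := by rw [dist_comm, dist_eq_norm]
      have h1 : (‖θ y / dist x y‖₊ : ℝ≥0∞) = (‖θ y‖₊ : ℝ≥0∞) * ‖(dist x y)⁻¹‖₊ := by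
        rw [div_eq_mul_inv, nnnorm_mul]; push_cast; ring
      rcases lt_or_ge ‖y - x‖ 1 with h | h
      · refine le_add_right ?_
        rw [h1, indicator_of_mem (by exact h)]
        refine mul_le_mul' hy (le_of_eq ?_)
        rw [← enorm_eq_nnnorm, ← ofReal_norm_eq_enorm, Real.norm_eq_abs, hxy,
          abs_of_nonneg (inv_nonneg.2 (norm_nonneg _))]
      · refine le_add_left ?_
        rw [h1]
        have : (‖(dist x y)⁻¹‖₊ : ℝ≥0∞) ≤ 1 := by
          rw [← enorm_eq_nnnorm, ← ofReal_norm_eq_enorm, Real.norm_eq_abs, hxy,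
            abs_of_nonneg (inv_nonneg.2 (norm_nonneg _))]
          exact ENNReal.ofReal_le_one.2 (inv_le_one_of_one_le₀ h)
        calc (‖θ y‖₊ : ℝ≥0∞) * ‖(dist x y)⁻¹‖₊ ≤ ‖θ y‖₊ * 1 := mul_le_mul_right this _
          _ = ‖θ y‖₊ := mul_one _
    have hmeas : Measurable (fun y : E2 ↦
        (Iio (1:ℝ)).indicator (fun t ↦ ENNReal.ofReal t⁻¹) ‖y - x‖) :=
      (Measurable.indicator (by fun_prop) measurableSet_Iio).comp (by fun_prop)
    calc ∫⁻ y, (‖θ y / dist x y‖₊ : ℝ≥0∞)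
        ≤ ∫⁻ y, (Ce * (Iio (1:ℝ)).indicator (fun t ↦ ENNReal.ofReal t⁻¹) ‖y - x‖ + ‖θ y‖₊) :=
          lintegral_mono_ae hbound
      _ = Ce * (∫⁻ y : E2, (Iio (1:ℝ)).indicator (fun t ↦ ENNReal.ofReal t⁻¹) ‖y - x‖)
            + ∫⁻ y, (‖θ y‖₊ : ℝ≥0∞) := by
          rw [lintegral_add_left (hmeas.const_mul Ce), lintegral_const_mul Ce hmeas]
      _ = Ce * ((volume : Measure E2).toSphere univ * ENNReal.ofReal 1)
            + ∫⁻ y, (‖θ y‖₊ : ℝ≥0∞) := by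
          rw [lint_translate (fun t ↦ (Iio (1:ℝ)).indicator (fun t ↦ ENNReal.ofReal t⁻¹) t) x,
            lint_inv_ball one_pos]
      _ < ⊤ := by
          refine ENNReal.add_lt_top.2 ⟨?_, hθ.2⟩
          exact ENNReal.mul_lt_top (lt_top_iff_ne_top.2 hCtop)
            (ENNReal.mul_lt_top (measure_lt_top _ _) ofReal_lt_top)

set_option maxHeartbeats 1000000 in
/-- Let `θ ∈ L¹(ℝ²) ∩ L²(ℝ²) ∩ L^∞(ℝ²)` and define
`ψ(x) = -∫_{ℝ²} θ(y)/|x-y| dy`. Then there is a constant `M`, depending only on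
`‖θ‖_{L¹}`, `‖θ‖_{L²}` and `‖θ‖_{L^∞}`, such that for all `z₁, z₂ ∈ ℝ²` with
`0 < |z₁ - z₂| ≤ 1/2`, one has `|ψ(z₁) - ψ(z₂)| ≤ M |z₁ - z₂| · |log |z₁ - z₂||`. -/
theorem qg_stream_function_log_lipschitz
    (θ ψ : EuclideanSpace ℝ (Fin 2) → ℝ)
    (hθ1 : MemLp θ 1 volume) (hθ2 : MemLp θ 2 volume) (hθtop : MemLp θ ⊤ volume)
    (hψ : ∀ x : EuclideanSpace ℝ (Fin 2), ψ x = -∫ y, θ y / dist x y) :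
    ∃ M : ℝ,
      ∀ z₁ z₂ : EuclideanSpace ℝ (Fin 2), 0 < dist z₁ z₂ → dist z₁ z₂ ≤ 1 / 2 →
        |ψ z₁ - ψ z₂| ≤ M * dist z₁ z₂ * |Real.log (dist z₁ z₂)| := by
  classical
  set c : ℝ≥0∞ := (volume : Measure E2).toSphere univ with hcdef
  have hθInt : Integrable θ volume := memLp_one_iff_integrable.mp hθ1
  set Ce : ℝ≥0∞ := eLpNormEssSup θ volume with hCedef
  have hCtop : Ce ≠ ⊤ := by
    have h := hθtop.2
    rwa [eLpNorm_exponent_top, lt_top_iff_ne_top] at h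
  have hC : ∀ᵐ y, (‖θ y‖₊ : ℝ≥0∞) ≤ Ce := enorm_ae_le_eLpNormEssSup θ volume
  set T : ℝ≥0∞ := ∫⁻ y, (‖θ y‖₊ : ℝ≥0∞) with hTdef
  have hTtop : T ≠ ⊤ := hθInt.2.ne
  have hctop : c ≠ ⊤ := measure_ne_top _ _
  set C : ℝ := Ce.toReal with hCdef
  set cR : ℝ := c.toReal with hcRdef
  set Tr : ℝ := T.toReal with hTrdef
  have hC0 : 0 ≤ C := ENNReal.toReal_nonneg
  have hc0 : 0 ≤ cR := ENNReal.toReal_nonneg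
  have hT0 : 0 ≤ Tr := ENNReal.toReal_nonneg
  have hlog2 : (0:ℝ) < Real.log 2 := Real.log_pos one_lt_two
  refine ⟨(5*C*cR + 2*Tr)/Real.log 2 + 2*C*cR, ?_⟩
  intro z₁ z₂ hr0 hr2
  set r : ℝ := dist z₁ z₂ with hrdef
  have h2r1 : 2*r ≤ 1 := by linarith
  have h2r0 : (0:ℝ) < 2*r := by linarith
  -- Step A
  have hstep : ψ z₁ - ψ z₂ = ∫ y, (θ y / dist z₂ y - θ y / dist z₁ y) := by
    rw [hψ z₁, hψ z₂,
      integral_sub (kernel_integrable θ hθInt Ce hCtop hC z₂)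
        (kernel_integrable θ hθInt Ce hCtop hC z₁)]
    ring
  have habs : |ψ z₁ - ψ z₂|
      ≤ (∫⁻ y, ENNReal.ofReal ‖θ y / dist z₂ y - θ y / dist z₁ y‖).toReal := by
    rw [hstep, ← Real.norm_eq_abs]
    exact norm_integral_le_lintegral_norm _
  -- dominating functions
  set A₁ : E2 → ℝ≥0∞ := fun y ↦ (Iio (2*r)).indicator (fun t ↦ ENNReal.ofReal t⁻¹) ‖y - z₁‖
    with hA₁def
  set A₂ : E2 → ℝ≥0∞ := fun y ↦ (Iio (3*r)).indicator (fun t ↦ ENNReal.ofReal t⁻¹) ‖y - z₂‖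
    with hA₂def
  set B : E2 → ℝ≥0∞ := fun y ↦ (Icc (2*r) 1).indicator (fun t ↦ ENNReal.ofReal (t⁻¹*t⁻¹)) ‖y - z₁‖
    with hBdef
  have hmeasA₁ : Measurable A₁ :=
    (Measurable.indicator (by fun_prop) measurableSet_Iio).comp (by fun_prop)
  have hmeasA₂ : Measurable A₂ :=
    (Measurable.indicator (by fun_prop) measurableSet_Iio).comp (by fun_prop)
  have hmeasB : Measurable B :=
    (Measurable.indicator (by fun_prop) measurableSet_Icc).comp (by fun_prop)
  -- pointwise bound
  have hpt : ∀ᵐ y, ENNReal.ofReal ‖θ y / dist z₂ y - θ y / dist z₁ y‖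
      ≤ Ce * (A₁ y + A₂ y) + Ce * ENNReal.ofReal (2*r) * B y
        + ENNReal.ofReal (2*r) * ‖θ y‖₊ := by
    filter_upwards [hC] with y hy
    have hd1 : (0:ℝ) ≤ dist z₁ y := dist_nonneg
    have hd2 : (0:ℝ) ≤ dist z₂ y := dist_nonneg
    have hdd : |dist z₁ y - dist z₂ y| ≤ r := abs_dist_sub_le z₁ z₂ y
    have hddl := (abs_le.1 hdd).1
    have hddr := (abs_le.1 hdd).2
    have hn1 : ‖y - z₁‖ = dist z₁ y := by rw [← dist_eq_norm, dist_comm]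
    have hn2 : ‖y - z₂‖ = dist z₂ y := by rw [← dist_eq_norm, dist_comm]
    have hofr : ENNReal.ofReal ‖θ y / dist z₂ y - θ y / dist z₁ y‖
        = (‖θ y‖₊ : ℝ≥0∞) * ENNReal.ofReal |(dist z₂ y)⁻¹ - (dist z₁ y)⁻¹| := by
      have key : θ y / dist z₂ y - θ y / dist z₁ y
          = θ y * ((dist z₂ y)⁻¹ - (dist z₁ y)⁻¹) := by
        rw [mul_sub, div_eq_mul_inv, div_eq_mul_inv]
      rw [key, Real.norm_eq_abs, abs_mul, ENNReal.ofReal_mul (abs_nonneg _),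
        ← enorm_eq_nnnorm, Real.enorm_eq_ofReal_abs]
    rcases lt_or_ge (dist z₁ y) (2*r) with h1 | h1
    · -- near region
      have h2 : dist z₂ y < 3*r := by linarith
      have hb : |(dist z₂ y)⁻¹ - (dist z₁ y)⁻¹| ≤ (dist z₁ y)⁻¹ + (dist z₂ y)⁻¹ := by
        rw [sub_eq_add_neg]
        refine (abs_add_le _ _).trans ?_
        rw [abs_neg, abs_of_nonneg (inv_nonneg.2 hd2), abs_of_nonneg (inv_nonneg.2 hd1)]
        linarith
      have : ENNReal.ofReal ‖θ y / dist z₂ y - θ y / dist z₁ y‖ ≤ Ce * (A₁ y + A₂ y) := by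
        rw [hofr, hA₁def, hA₂def]
        simp only
        rw [indicator_of_mem (show ‖y - z₁‖ ∈ Iio (2*r) by rw [hn1]; exact h1),
          indicator_of_mem (show ‖y - z₂‖ ∈ Iio (3*r) by rw [hn2]; exact h2),
          hn1, hn2, ← ENNReal.ofReal_add (inv_nonneg.2 hd1) (inv_nonneg.2 hd2)]
        exact mul_le_mul' hy (ENNReal.ofReal_le_ofReal hb)
      exact le_add_right (le_add_right this)
    · -- d₁ ≥ 2r
      have hd1pos : (0:ℝ) < dist z₁ y := lt_of_lt_of_le h2r0 h1
      have hd2half : dist z₁ y / 2 ≤ dist z₂ y := by linarith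
      have hd2pos : (0:ℝ) < dist z₂ y := lt_of_lt_of_le (by linarith) hd2half
      have hfrac : |(dist z₂ y)⁻¹ - (dist z₁ y)⁻¹|
          = |dist z₁ y - dist z₂ y| / (dist z₁ y * dist z₂ y) := by
        have heq : (dist z₂ y)⁻¹ - (dist z₁ y)⁻¹
            = (dist z₁ y - dist z₂ y) / (dist z₁ y * dist z₂ y) := by
          field_simp
        rw [heq, abs_div, abs_of_pos (mul_pos hd1pos hd2pos)]
      rcases le_or_gt (dist z₁ y) 1 with h3 | h3
      · -- middle region
        have hb : |(dist z₂ y)⁻¹ - (dist z₁ y)⁻¹|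
            ≤ 2*r * ((dist z₁ y)⁻¹ * (dist z₁ y)⁻¹) := by
          rw [hfrac]
          have hden : dist z₁ y * (dist z₁ y / 2) ≤ dist z₁ y * dist z₂ y :=
            mul_le_mul_of_nonneg_left hd2half hd1
          calc |dist z₁ y - dist z₂ y| / (dist z₁ y * dist z₂ y)
              ≤ r / (dist z₁ y * (dist z₁ y / 2)) :=
                div_le_div₀ (by linarith) hdd (by positivity) hden
            _ = 2*r * ((dist z₁ y)⁻¹ * (dist z₁ y)⁻¹) := by
                field_simp
        have : ENNReal.ofReal ‖θ y / dist z₂ y - θ y / dist z₁ y‖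
            ≤ Ce * ENNReal.ofReal (2*r) * B y := by
          rw [hofr, hBdef]
          simp only
          rw [indicator_of_mem (show ‖y - z₁‖ ∈ Icc (2*r) 1 by rw [hn1]; exact ⟨h1, h3⟩)]
          calc (‖θ y‖₊ : ℝ≥0∞) * ENNReal.ofReal |(dist z₂ y)⁻¹ - (dist z₁ y)⁻¹|
              ≤ Ce * ENNReal.ofReal (2*r * ((dist z₁ y)⁻¹ * (dist z₁ y)⁻¹)) :=
                mul_le_mul' hy (ENNReal.ofReal_le_ofReal hb)
            _ = Ce * ENNReal.ofReal (2*r) * ENNReal.ofReal ((dist z₁ y)⁻¹ * (dist z₁ y)⁻¹) := by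
                rw [ENNReal.ofReal_mul h2r0.le, mul_assoc]
            _ = _ := by rw [hn1]
        calc ENNReal.ofReal ‖θ y / dist z₂ y - θ y / dist z₁ y‖
            ≤ Ce * ENNReal.ofReal (2*r) * B y := this
          _ ≤ Ce * (A₁ y + A₂ y) + Ce * ENNReal.ofReal (2*r) * B y := le_add_self
          _ ≤ _ := le_add_right le_rfl
      · -- far region
        have hd2ge : (1:ℝ)/2 ≤ dist z₂ y := by linarith
        have hb : |(dist z₂ y)⁻¹ - (dist z₁ y)⁻¹| ≤ 2*r := by
          rw [hfrac]
          have : (1:ℝ) * (1/2) ≤ dist z₁ y * dist z₂ y :=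
            mul_le_mul h3.le hd2ge (by norm_num) hd1
          calc |dist z₁ y - dist z₂ y| / (dist z₁ y * dist z₂ y)
              ≤ r / (1 * (1/2)) := div_le_div₀ (by linarith) hdd (by norm_num) this
            _ = 2*r := by ring
        have : ENNReal.ofReal ‖θ y / dist z₂ y - θ y / dist z₁ y‖
            ≤ ENNReal.ofReal (2*r) * ‖θ y‖₊ := by
          rw [hofr, mul_comm]
          exact mul_le_mul_left (ENNReal.ofReal_le_ofReal hb) _
        exact le_add_self.trans' this |>.trans le_rfl
  -- integral of the dominating function
  have hA₁int : ∫⁻ y, A₁ y = c * ENNReal.ofReal (2*r) := by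
    rw [hA₁def]
    rw [lint_translate ((Iio (2*r)).indicator (fun t ↦ ENNReal.ofReal t⁻¹)) z₁,
      lint_inv_ball h2r0]
  have hA₂int : ∫⁻ y, A₂ y = c * ENNReal.ofReal (3*r) := by
    rw [hA₂def]
    rw [lint_translate ((Iio (3*r)).indicator (fun t ↦ ENNReal.ofReal t⁻¹)) z₂,
      lint_inv_ball (by linarith)]
  have hBint : ∫⁻ y, B y = c * ENNReal.ofReal (Real.log 1 - Real.log (2*r)) := by
    rw [hBdef]
    rw [lint_translate ((Icc (2*r) 1).indicator (fun t ↦ ENNReal.ofReal (t⁻¹*t⁻¹))) z₁,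
      lint_inv_sq_annulus h2r0 h2r1]
  have hG : (∫⁻ y, (Ce * (A₁ y + A₂ y) + Ce * ENNReal.ofReal (2*r) * B y
        + ENNReal.ofReal (2*r) * ‖θ y‖₊))
      = Ce * (c * ENNReal.ofReal (2*r) + c * ENNReal.ofReal (3*r))
        + Ce * ENNReal.ofReal (2*r) * (c * ENNReal.ofReal (Real.log 1 - Real.log (2*r)))
        + ENNReal.ofReal (2*r) * T := by
    rw [lintegral_add_left (f := fun y ↦ Ce * (A₁ y + A₂ y) + Ce * ENNReal.ofReal (2*r) * B y)
        (((hmeasA₁.add hmeasA₂).const_mul Ce).add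
        (hmeasB.const_mul (Ce * ENNReal.ofReal (2*r))))]
    rw [lintegral_add_left (f := fun y ↦ Ce * (A₁ y + A₂ y)) ((hmeasA₁.add hmeasA₂).const_mul Ce)]
    rw [lintegral_const_mul Ce (f := fun y ↦ A₁ y + A₂ y) (hmeasA₁.add hmeasA₂),
      lintegral_const_mul (Ce * ENNReal.ofReal (2*r)) hmeasB,
      lintegral_add_left hmeasA₁,
      lintegral_const_mul' (ENNReal.ofReal (2*r)) _ ofReal_ne_top,
      hA₁int, hA₂int, hBint]
  -- combine
  have hI : (∫⁻ y, ENNReal.ofReal ‖θ y / dist z₂ y - θ y / dist z₁ y‖)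
      ≤ Ce * (c * ENNReal.ofReal (2*r) + c * ENNReal.ofReal (3*r))
        + Ce * ENNReal.ofReal (2*r) * (c * ENNReal.ofReal (Real.log 1 - Real.log (2*r)))
        + ENNReal.ofReal (2*r) * T :=
    (lintegral_mono_ae hpt).trans_eq hG
  -- pass to real numbers
  have hL2r : (0:ℝ) ≤ Real.log 1 - Real.log (2*r) := by
    have := Real.log_nonpos (by positivity) h2r1
    rw [Real.log_one]
    linarith
  set S : ℝ≥0∞ := Ce * (c * ENNReal.ofReal (2*r) + c * ENNReal.ofReal (3*r))
        + Ce * ENNReal.ofReal (2*r) * (c * ENNReal.ofReal (Real.log 1 - Real.log (2*r)))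
        + ENNReal.ofReal (2*r) * T with hSdef
  have hStop : S ≠ ⊤ := by
    rw [hSdef]
    finiteness
  have hSreal : S.toReal = C * (cR*(2*r) + cR*(3*r))
      + C*(2*r) * (cR*(Real.log 1 - Real.log (2*r))) + (2*r)*Tr := by
    rw [hSdef]
    rw [ENNReal.toReal_add (by finiteness) (by finiteness),
      ENNReal.toReal_add (by finiteness) (by finiteness)]
    simp only [ENNReal.toReal_mul]
    rw [ENNReal.toReal_add (by finiteness) (by finiteness)]
    simp only [ENNReal.toReal_mul]
    rw [ENNReal.toReal_ofReal h2r0.le, ENNReal.toReal_ofReal (by linarith : (0:ℝ) ≤ 3*r),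
      ENNReal.toReal_ofReal hL2r]
  -- real-side estimate
  have hr1 : r < 1 := by linarith
  have hlogr_neg : Real.log r < 0 := Real.log_neg hr0 hr1
  have habslog : |Real.log r| = -Real.log r := abs_of_neg hlogr_neg
  have hl2 : Real.log 2 ≤ -Real.log r := by
    have h := Real.log_le_log hr0 hr2
    rw [show (1:ℝ)/2 = 2⁻¹ by norm_num, Real.log_inv] at h
    linarith
  have hlog2r : Real.log (2*r) = Real.log 2 + Real.log r :=
    Real.log_mul (by norm_num) hr0.ne'
  have hreal : C * (cR*(2*r) + cR*(3*r)) + C*(2*r) * (cR*(Real.log 1 - Real.log (2*r)))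
      + (2*r)*Tr ≤ ((5*C*cR + 2*Tr)/Real.log 2 + 2*C*cR) * r * |Real.log r| := by
    rw [habslog, Real.log_one, hlog2r]
    set l : ℝ := -Real.log r with hldef
    have hl0 : 0 < l := by rw [hldef]; linarith
    have hkey : (5*C*cR + 2*Tr) * r ≤ (5*C*cR + 2*Tr)/Real.log 2 * (r * l) := by
      rw [div_mul_eq_mul_div, le_div_iff₀ hlog2]
      have h1 : r * Real.log 2 ≤ r * l := mul_le_mul_of_nonneg_left hl2 hr0.le
      have h2 : (0:ℝ) ≤ 5*C*cR + 2*Tr := by positivity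
      linarith [mul_le_mul_of_nonneg_left h1 h2]
    have hkey2 : C*(2*r) * (cR * (0 - (Real.log 2 + Real.log r)))
        ≤ 2*C*cR * (r * l) := by
      have hLl : 0 - (Real.log 2 + Real.log r) ≤ l := by rw [hldef]; linarith
      have : cR * (0 - (Real.log 2 + Real.log r)) ≤ cR * l :=
        mul_le_mul_of_nonneg_left hLl hc0
      linarith [mul_le_mul_of_nonneg_left this (by positivity : (0:ℝ) ≤ C*(2*r))]
    nlinarith [hkey, hkey2]
  calc |ψ z₁ - ψ z₂|
      ≤ (∫⁻ y, ENNReal.ofReal ‖θ y / dist z₂ y - θ y / dist z₁ y‖).toReal := habs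
    _ ≤ S.toReal := ENNReal.toReal_mono hStop hI
    _ = _ := hSreal
    _ ≤ ((5*C*cR + 2*Tr)/Real.log 2 + 2*C*cR) * r * |Real.log r| := hreal
end

section
/- Let q : ℝ² × [0,T*) → ℝ and ψ : ℝ² × [0,T*) → ℝ be C¹ functions satisfying ∂_t q + ∇^⊥ψ · ∇_x q = 0. Let φ₁, φ₂ : [a,b] × [0,T*) → ℝ be C¹ graph parameterizations of two level curves of q (q(x₁, φᵢ(x₁,t), t) constant for each i), with ∂q/∂x₂ ≠ 0 along both curves. Then the area between the curves over [a,b] satisfies, for every t ∈ [0,T*): d/dt ∫_a^b [φ₂(x₁,t) − φ₁(x₁,t)] dx₁ = ψ(b, φ₂(b,t), t) − ψ(a, φ₂(a,t), t) + ψ(a, φ₁(a,t), t) − ψ(b, φ₁(b,t), t). -/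
open MeasureTheory

noncomputable def pt (x₁ x₂ : ℝ) : EuclideanSpace ℝ (Fin 2) := WithLp.toLp 2 ![x₁, x₂]
def timeDom (Tstar : EReal) : Set ℝ := {t : ℝ | 0 ≤ t ∧ (t : EReal) < Tstar}

lemma timeDom_convex (Tstar : EReal) : Convex ℝ (timeDom Tstar) := by
  have h : timeDom Tstar = {t : ℝ | 0 ≤ t} ∩ {t : ℝ | (t : EReal) < Tstar} := rfl
  rw [h]
  apply Convex.inter (convex_Ici 0)
  intro x hx y hy s u hs hu hsu
  simp only [Set.mem_setOf_eq] at *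
  rcases le_total x y with hxy | hxy
  · calc ((s*x+u*y : ℝ) : EReal) ≤ ((y:ℝ) : EReal) := by
          norm_cast
          have h1 : s*x ≤ s*y := mul_le_mul_of_nonneg_left hxy hs
          have h2 : s*y + u*y = y := by rw [← add_mul, hsu, one_mul]
          linarith
        _ < Tstar := hy
  · calc ((s*x+u*y : ℝ) : EReal) ≤ ((x:ℝ) : EReal) := by
          norm_cast
          have h1 : u*y ≤ u*x := mul_le_mul_of_nonneg_left hxy hu
          have h2 : s*x + u*x = x := by rw [← add_mul, hsu, one_mul]
          linarith
        _ < Tstar := hx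

lemma timeDom_interior (Tstar : EReal) (hT : 0 < Tstar) : (interior (timeDom Tstar)).Nonempty := by
  obtain ⟨r, hr0, hrT⟩ := EReal.exists_between_coe_real hT
  have hr0' : (0:ℝ) < r := by exact_mod_cast hr0
  refine ⟨r/2, ?_⟩
  rw [mem_interior_iff_mem_nhds]
  have h : Set.Ioo 0 r ∈ nhds (r/2) := Ioo_mem_nhds (by linarith) (by linarith)
  refine Filter.mem_of_superset h ?_
  rintro s ⟨h1, h2⟩
  exact ⟨le_of_lt h1, lt_trans (by exact_mod_cast h2) hrT⟩

lemma timeDom_uniqueDiff (Tstar : EReal) (hT : 0 < Tstar) : UniqueDiffOn ℝ (timeDom Tstar) :=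
  uniqueDiffOn_convex (timeDom_convex Tstar) (timeDom_interior Tstar hT)

lemma pt_eq (x₁ x₂ : ℝ) : pt x₁ x₂ = x₁ • (EuclideanSpace.single (0:Fin 2) (1:ℝ)) + x₂ • (EuclideanSpace.single (1:Fin 2) (1:ℝ)) := by
  ext i
  fin_cases i <;> simp [pt, EuclideanSpace.single_apply]

noncomputable section

abbrev E2 := EuclideanSpace ℝ (Fin 2)

/-- shorthand -/
abbrev e0 : E2 := EuclideanSpace.single (0:Fin 2) (1:ℝ)
abbrev e1 : E2 := EuclideanSpace.single (1:Fin 2) (1:ℝ)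

variable {Tstar : EReal} {q : E2 → ℝ → ℝ}

/-- spatial fderiv of q at fixed time t ∈ D equals full fderivWithin composed with inl -/
lemma hasFDerivAt_space
    (hq : ContDiffOn ℝ 1 (fun p : E2 × ℝ => q p.1 p.2) (Set.univ ×ˢ timeDom Tstar))
    (x : E2) {t : ℝ} (ht : t ∈ timeDom Tstar) :
    HasFDerivAt (fun z => q z t)
      ((fderivWithin ℝ (fun p : E2 × ℝ => q p.1 p.2) (Set.univ ×ˢ timeDom Tstar) (x, t)).comp
        (ContinuousLinearMap.inl ℝ E2 ℝ)) x := by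
  have hmem : (x, t) ∈ Set.univ ×ˢ timeDom Tstar := ⟨Set.mem_univ _, ht⟩
  have hL := ((hq.differentiableOn one_ne_zero) _ hmem).hasFDerivWithinAt
  have hinner := hasFDerivAt_prodMk_left (𝕜 := ℝ) x t
  have := hL.comp (s := Set.univ) x hinner.hasFDerivWithinAt (fun z _ => show (z, t) ∈ Set.univ ×ˢ timeDom Tstar from ⟨Set.mem_univ _, ht⟩)
  rw [← hasFDerivWithinAt_univ]
  exact this

/-- time derivative of q at fixed x equals full fderivWithin applied to (0,1) -/
lemma hasDerivWithinAt_time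
    (hq : ContDiffOn ℝ 1 (fun p : E2 × ℝ => q p.1 p.2) (Set.univ ×ˢ timeDom Tstar))
    (x : E2) {t : ℝ} (ht : t ∈ timeDom Tstar) :
    HasDerivWithinAt (fun s => q x s)
      ((fderivWithin ℝ (fun p : E2 × ℝ => q p.1 p.2) (Set.univ ×ˢ timeDom Tstar) (x, t)) (0, 1))
      (timeDom Tstar) t := by
  have hmem : (x, t) ∈ Set.univ ×ˢ timeDom Tstar := ⟨Set.mem_univ _, ht⟩
  have hL := ((hq.differentiableOn one_ne_zero) _ hmem).hasFDerivWithinAt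
  have hinner : HasDerivWithinAt (fun s : ℝ => ((x : E2), s)) ((0 : E2), (1:ℝ)) (timeDom Tstar) t :=
    ((hasDerivAt_const t x).prodMk (hasDerivAt_id t)).hasDerivWithinAt
  exact hL.comp_hasDerivWithinAt t hinner (fun s hs => ⟨Set.mem_univ _, hs⟩)


variable {a b : ℝ} {φ : ℝ → ℝ → ℝ}

/-- time partial of φ -/
lemma phi_hasDerivWithinAt_time
    (hφ : ContDiffOn ℝ 1 (fun p : ℝ × ℝ => φ p.1 p.2) (Set.Icc a b ×ˢ timeDom Tstar))
    {x : ℝ} (hx : x ∈ Set.Icc a b) {t : ℝ} (ht : t ∈ timeDom Tstar) :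
    HasDerivWithinAt (fun s => φ x s)
      ((fderivWithin ℝ (fun p : ℝ × ℝ => φ p.1 p.2) (Set.Icc a b ×ˢ timeDom Tstar) (x, t)) (0, 1))
      (timeDom Tstar) t := by
  have hmem : (x, t) ∈ Set.Icc a b ×ˢ timeDom Tstar := ⟨hx, ht⟩
  have hL := ((hφ.differentiableOn one_ne_zero) _ hmem).hasFDerivWithinAt
  have hinner : HasDerivWithinAt (fun s : ℝ => (x, s)) ((0 : ℝ), (1:ℝ)) (timeDom Tstar) t :=
    ((hasDerivAt_const t x).prodMk (hasDerivAt_id t)).hasDerivWithinAt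
  exact hL.comp_hasDerivWithinAt t hinner (fun s hs => ⟨hx, hs⟩)

/-- space partial of φ -/
lemma phi_hasDerivWithinAt_space
    (hφ : ContDiffOn ℝ 1 (fun p : ℝ × ℝ => φ p.1 p.2) (Set.Icc a b ×ˢ timeDom Tstar))
    {x : ℝ} (hx : x ∈ Set.Icc a b) {t : ℝ} (ht : t ∈ timeDom Tstar) :
    HasDerivWithinAt (fun y => φ y t)
      ((fderivWithin ℝ (fun p : ℝ × ℝ => φ p.1 p.2) (Set.Icc a b ×ˢ timeDom Tstar) (x, t)) (1, 0))
      (Set.Icc a b) x := by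
  have hmem : (x, t) ∈ Set.Icc a b ×ˢ timeDom Tstar := ⟨hx, ht⟩
  have hL := ((hφ.differentiableOn one_ne_zero) _ hmem).hasFDerivWithinAt
  have hinner : HasDerivWithinAt (fun y : ℝ => (y, t)) ((1 : ℝ), (0:ℝ)) (Set.Icc a b) x :=
    ((hasDerivAt_id x).prodMk (hasDerivAt_const x t)).hasDerivWithinAt
  exact hL.comp_hasDerivWithinAt x hinner (fun y hy => show (y, t) ∈ Set.Icc a b ×ˢ timeDom Tstar from ⟨hy, ht⟩)

/-- curve point, time direction -/
lemma curve_hasDerivWithinAt_time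
    (hφ : ContDiffOn ℝ 1 (fun p : ℝ × ℝ => φ p.1 p.2) (Set.Icc a b ×ˢ timeDom Tstar))
    {x : ℝ} (hx : x ∈ Set.Icc a b) {t : ℝ} (ht : t ∈ timeDom Tstar) :
    HasDerivWithinAt (fun s => pt x (φ x s))
      (((fderivWithin ℝ (fun p : ℝ × ℝ => φ p.1 p.2) (Set.Icc a b ×ˢ timeDom Tstar) (x, t)) (0, 1)) • e1)
      (timeDom Tstar) t := by
  have h := ((phi_hasDerivWithinAt_time hφ hx ht).smul_const e1).const_add (x • e0)
  refine h.congr (fun s _ => pt_eq _ _) (pt_eq _ _)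

/-- curve point, space direction -/
lemma curve_hasDerivWithinAt_space
    (hφ : ContDiffOn ℝ 1 (fun p : ℝ × ℝ => φ p.1 p.2) (Set.Icc a b ×ˢ timeDom Tstar))
    {x : ℝ} (hx : x ∈ Set.Icc a b) {t : ℝ} (ht : t ∈ timeDom Tstar) :
    HasDerivWithinAt (fun y => pt y (φ y t))
      (e0 + ((fderivWithin ℝ (fun p : ℝ × ℝ => φ p.1 p.2) (Set.Icc a b ×ˢ timeDom Tstar) (x, t)) (1, 0)) • e1)
      (Set.Icc a b) x := by
  have h1 : HasDerivWithinAt (fun y : ℝ => y • e0) ((1:ℝ) • e0) (Set.Icc a b) x :=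
    (hasDerivAt_id x).hasDerivWithinAt.smul_const e0
  have h := h1.add ((phi_hasDerivWithinAt_space hφ hx ht).smul_const e1)
  rw [one_smul] at h
  refine h.congr (fun y _ => pt_eq _ _) (pt_eq _ _)


variable {ψ : E2 → ℝ → ℝ}

lemma g_eq_psi_deriv (hT : 0 < Tstar)
    (hq : ContDiffOn ℝ 1 (fun p : E2 × ℝ => q p.1 p.2) (Set.univ ×ˢ timeDom Tstar))
    (hψ : ContDiffOn ℝ 1 (fun p : E2 × ℝ => ψ p.1 p.2) (Set.univ ×ˢ timeDom Tstar))
    (htransport : ∀ (x : E2), ∀ t ∈ timeDom Tstar,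
      derivWithin (fun s => q x s) (timeDom Tstar) t
        + (-(fderiv ℝ (fun z => ψ z t) x (EuclideanSpace.single 1 1)))
            * fderiv ℝ (fun z => q z t) x (EuclideanSpace.single 0 1)
        + (fderiv ℝ (fun z => ψ z t) x (EuclideanSpace.single 0 1))
            * fderiv ℝ (fun z => q z t) x (EuclideanSpace.single 1 1) = 0)
    (hab : a < b)
    (hφ : ContDiffOn ℝ 1 (fun p : ℝ × ℝ => φ p.1 p.2) (Set.Icc a b ×ˢ timeDom Tstar))
    {K : ℝ}
    (hlevel : ∀ x₁ ∈ Set.Icc a b, ∀ t ∈ timeDom Tstar, q (pt x₁ (φ x₁ t)) t = K)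
    (hnondeg : ∀ x₁ ∈ Set.Icc a b, ∀ t ∈ timeDom Tstar,
      fderiv ℝ (fun z => q z t) (pt x₁ (φ x₁ t)) (EuclideanSpace.single 1 1) ≠ 0)
    {x : ℝ} (hx : x ∈ Set.Icc a b) {t : ℝ} (ht : t ∈ timeDom Tstar) :
    HasDerivWithinAt (fun y => ψ (pt y (φ y t)) t)
      ((fderivWithin ℝ (fun p : ℝ × ℝ => φ p.1 p.2) (Set.Icc a b ×ˢ timeDom Tstar) (x, t)) (0, 1))
      (Set.Icc a b) x := by
  have hu : UniqueDiffWithinAt ℝ (timeDom Tstar) t := timeDom_uniqueDiff Tstar hT t ht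
  have huB : UniqueDiffWithinAt ℝ (Set.Icc a b) x := uniqueDiffOn_Icc hab x hx
  -- notation
  let P : E2 := pt x (φ x t)
  let M := fderivWithin ℝ (fun p : ℝ × ℝ => φ p.1 p.2) (Set.Icc a b ×ˢ timeDom Tstar) (x, t)
  let Lq := fderivWithin ℝ (fun p : E2 × ℝ => q p.1 p.2) (Set.univ ×ˢ timeDom Tstar) (P, t)
  let Lψ := fderivWithin ℝ (fun p : E2 × ℝ => ψ p.1 p.2) (Set.univ ×ˢ timeDom Tstar) (P, t)
  -- spatial partial identifications
  have hfq := (hasFDerivAt_space hq P ht).fderiv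
  have hfψ := (hasFDerivAt_space hψ P ht).fderiv
  have hq1 : fderiv ℝ (fun z => q z t) P (EuclideanSpace.single 0 1) = Lq (e0, 0) := by
    rw [hfq]; rfl
  have hq2 : fderiv ℝ (fun z => q z t) P (EuclideanSpace.single 1 1) = Lq (e1, 0) := by
    rw [hfq]; rfl
  have hψ1 : fderiv ℝ (fun z => ψ z t) P (EuclideanSpace.single 0 1) = Lψ (e0, 0) := by
    rw [hfψ]; rfl
  have hψ2 : fderiv ℝ (fun z => ψ z t) P (EuclideanSpace.single 1 1) = Lψ (e1, 0) := by
    rw [hfψ]; rfl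
  have hqt : derivWithin (fun s => q P s) (timeDom Tstar) t = Lq ((0 : E2), (1:ℝ)) :=
    (hasDerivWithinAt_time hq P ht).derivWithin hu
  -- Step A : time chain rule along the curve
  have hLqW := ((hq.differentiableOn one_ne_zero) (P, t) ⟨Set.mem_univ _, ht⟩).hasFDerivWithinAt
  have hpairA : HasDerivWithinAt (fun s => ((pt x (φ x s)), s)) ((M (0,1)) • e1, 1)
      (timeDom Tstar) t :=
    (curve_hasDerivWithinAt_time hφ hx ht).prodMk (hasDerivAt_id t).hasDerivWithinAt
  have hA0 : HasDerivWithinAt (fun s => q (pt x (φ x s)) s) (Lq ((M (0,1)) • e1, 1))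
      (timeDom Tstar) t := by
    exact HasFDerivWithinAt.comp_hasDerivWithinAt (f := fun s => ((pt x (φ x s)), s)) t
      hLqW hpairA (fun s hs => ⟨Set.mem_univ _, hs⟩)
  have hconstA : HasDerivWithinAt (fun _ : ℝ => K) (Lq ((M (0,1)) • e1, 1)) (timeDom Tstar) t :=
    hA0.congr (fun s hs => (hlevel x hx s hs).symm) (hlevel x hx t ht).symm
  have eqA : Lq ((M (0,1)) • e1, 1) = 0 :=
    (hconstA.derivWithin hu).symm.trans ((hasDerivWithinAt_const t _ K).derivWithin hu)
  -- Step B : space chain rule along the curve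
  have hpairB : HasDerivWithinAt (fun y => ((pt y (φ y t)), t)) (e0 + (M (1,0)) • e1, 0)
      (Set.Icc a b) x :=
    (curve_hasDerivWithinAt_space hφ hx ht).prodMk (hasDerivWithinAt_const x _ t)
  have hB0 : HasDerivWithinAt (fun y => q (pt y (φ y t)) t) (Lq (e0 + (M (1,0)) • e1, 0))
      (Set.Icc a b) x := by
    exact HasFDerivWithinAt.comp_hasDerivWithinAt (f := fun y => ((pt y (φ y t)), t)) x
      hLqW hpairB (fun y hy => ⟨Set.mem_univ _, ht⟩)
  have hconstB : HasDerivWithinAt (fun _ : ℝ => K) (Lq (e0 + (M (1,0)) • e1, 0)) (Set.Icc a b) x :=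
    hB0.congr (fun y hy => (hlevel y hy t ht).symm) (hlevel x hx t ht).symm
  have eqB : Lq (e0 + (M (1,0)) • e1, 0) = 0 :=
    (hconstB.derivWithin huB).symm.trans ((hasDerivWithinAt_const x _ K).derivWithin huB)
  -- Step D : ψ chain rule along the curve in space
  have hLψW := ((hψ.differentiableOn one_ne_zero) (P, t) ⟨Set.mem_univ _, ht⟩).hasFDerivWithinAt
  have hD0 : HasDerivWithinAt (fun y => ψ (pt y (φ y t)) t) (Lψ (e0 + (M (1,0)) • e1, 0))
      (Set.Icc a b) x := by
    exact HasFDerivWithinAt.comp_hasDerivWithinAt (f := fun y => ((pt y (φ y t)), t)) x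
      hLψW hpairB (fun y hy => ⟨Set.mem_univ _, ht⟩)
  -- linear expansions
  have splitA : (((M (0,1)) • e1 : E2), (1:ℝ)) = (M (0,1)) • ((e1, 0) : E2 × ℝ) + ((0:E2), (1:ℝ)) := by
    simp
  have splitB : ((e0 + (M (1,0)) • e1 : E2), (0:ℝ)) = ((e0, 0) : E2 × ℝ) + (M (1,0)) • ((e1, 0) : E2 × ℝ) := by
    simp
  have expandA : Lq ((M (0,1)) • e1, 1) = M (0,1) * Lq (e1, 0) + Lq ((0:E2), (1:ℝ)) := by
    rw [splitA, map_add, Lq.map_smul, smul_eq_mul]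
  have expandB : Lq (e0 + (M (1,0)) • e1, 0) = Lq (e0, 0) + M (1,0) * Lq (e1, 0) := by
    rw [splitB, map_add, Lq.map_smul, smul_eq_mul]
  have expandD : Lψ (e0 + (M (1,0)) • e1, 0) = Lψ (e0, 0) + M (1,0) * Lψ (e1, 0) := by
    rw [splitB, map_add, Lψ.map_smul, smul_eq_mul]
  -- transport equation at P
  have htr := htransport P t ht
  rw [hq1, hq2, hψ1, hψ2, hqt] at htr
  have hnz : Lq (e1, 0) ≠ 0 := by rw [← hq2]; exact hnondeg x hx t ht
  rw [expandA] at eqA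
  rw [expandB] at eqB
  -- value identification
  have hval : Lψ (e0, 0) + M (1,0) * Lψ (e1, 0) = M (0,1) := by
    have hfac : (Lψ (e0, 0) + M (1,0) * Lψ (e1, 0) - M (0,1)) * Lq (e1, 0) = 0 := by
      linear_combination htr - eqA + Lψ (e1, 0) * eqB
    rcases mul_eq_zero.mp hfac with h | h
    · linarith
    · exact absurd h hnz
  rw [expandD, hval] at hD0
  exact hD0


lemma prod_uniqueDiff (hT : 0 < Tstar) (hab : a < b) :
    UniqueDiffOn ℝ (Set.Icc a b ×ˢ timeDom Tstar) := by
  apply uniqueDiffOn_convex ((convex_Icc a b).prod (timeDom_convex Tstar))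
  rw [interior_prod_eq, interior_Icc]
  obtain ⟨r, hr⟩ := timeDom_interior Tstar hT
  exact ⟨((a+b)/2, r), ⟨by constructor <;> linarith, hr⟩⟩

lemma g_continuousOn (hT : 0 < Tstar) (hab : a < b)
    (hφ : ContDiffOn ℝ 1 (fun p : ℝ × ℝ => φ p.1 p.2) (Set.Icc a b ×ˢ timeDom Tstar)) :
    ContinuousOn (fun p : ℝ × ℝ =>
      (fderivWithin ℝ (fun p : ℝ × ℝ => φ p.1 p.2) (Set.Icc a b ×ˢ timeDom Tstar) p) ((0:ℝ),(1:ℝ)))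
      (Set.Icc a b ×ˢ timeDom Tstar) := by
  have h := hφ.continuousOn_fderivWithin (prod_uniqueDiff hT hab) le_rfl
  exact (ContinuousLinearMap.apply ℝ ℝ ((0:ℝ),(1:ℝ))).continuous.comp_continuousOn h

lemma psi_curve_continuousOn {ψ : E2 → ℝ → ℝ}
    (hψ : ContDiffOn ℝ 1 (fun p : E2 × ℝ => ψ p.1 p.2) (Set.univ ×ˢ timeDom Tstar))
    (hφ : ContDiffOn ℝ 1 (fun p : ℝ × ℝ => φ p.1 p.2) (Set.Icc a b ×ˢ timeDom Tstar))
    {t : ℝ} (ht : t ∈ timeDom Tstar) :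
    ContinuousOn (fun y => ψ (pt y (φ y t)) t) (Set.Icc a b) := by
  have hφc : ContinuousOn (fun y => φ y t) (Set.Icc a b) := by
    have hin : ContinuousOn (fun y : ℝ => (y, t)) (Set.Icc a b) :=
      (continuous_id.prodMk continuous_const).continuousOn
    exact hφ.continuousOn.comp hin (fun y hy => ⟨hy, ht⟩)
  have hptc : ContinuousOn (fun y => pt y (φ y t)) (Set.Icc a b) := by
    have : ContinuousOn (fun y : ℝ => y • e0 + (φ y t) • e1) (Set.Icc a b) :=
      ((continuousOn_id.smul continuousOn_const)).add (hφc.smul continuousOn_const)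
    exact this.congr (fun y _ => pt_eq _ _)
  have hψc := hψ.continuousOn
  exact hψc.comp (f := fun y => (pt y (φ y t), t)) (hptc.prodMk continuousOn_const) (fun y hy => ⟨Set.mem_univ _, ht⟩)

lemma integral_g_eq {ψ : E2 → ℝ → ℝ} (hT : 0 < Tstar)
    (hq : ContDiffOn ℝ 1 (fun p : E2 × ℝ => q p.1 p.2) (Set.univ ×ˢ timeDom Tstar))
    (hψ : ContDiffOn ℝ 1 (fun p : E2 × ℝ => ψ p.1 p.2) (Set.univ ×ˢ timeDom Tstar))
    (htransport : ∀ (x : E2), ∀ t ∈ timeDom Tstar,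
      derivWithin (fun s => q x s) (timeDom Tstar) t
        + (-(fderiv ℝ (fun z => ψ z t) x (EuclideanSpace.single 1 1)))
            * fderiv ℝ (fun z => q z t) x (EuclideanSpace.single 0 1)
        + (fderiv ℝ (fun z => ψ z t) x (EuclideanSpace.single 0 1))
            * fderiv ℝ (fun z => q z t) x (EuclideanSpace.single 1 1) = 0)
    (hab : a < b)
    (hφ : ContDiffOn ℝ 1 (fun p : ℝ × ℝ => φ p.1 p.2) (Set.Icc a b ×ˢ timeDom Tstar))
    {K : ℝ}
    (hlevel : ∀ x₁ ∈ Set.Icc a b, ∀ t ∈ timeDom Tstar, q (pt x₁ (φ x₁ t)) t = K)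
    (hnondeg : ∀ x₁ ∈ Set.Icc a b, ∀ t ∈ timeDom Tstar,
      fderiv ℝ (fun z => q z t) (pt x₁ (φ x₁ t)) (EuclideanSpace.single 1 1) ≠ 0)
    {t : ℝ} (ht : t ∈ timeDom Tstar) :
    ∫ x in a..b, (fderivWithin ℝ (fun p : ℝ × ℝ => φ p.1 p.2)
        (Set.Icc a b ×ˢ timeDom Tstar) (x, t)) ((0:ℝ),(1:ℝ))
      = ψ (pt b (φ b t)) t - ψ (pt a (φ a t)) t := by
  apply intervalIntegral.integral_eq_sub_of_hasDeriv_right_of_le hab.le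
  · exact psi_curve_continuousOn hψ hφ ht
  · intro y hy
    have h := g_eq_psi_deriv hT hq hψ htransport hab hφ hlevel hnondeg
      (Set.mem_Icc.mpr ⟨hy.1.le, hy.2.le⟩) ht
    apply h.mono_of_mem_nhdsWithin
    have h1 : Set.Ioc y b ∈ nhdsWithin y (Set.Ioi y) :=
      Filter.inter_mem self_mem_nhdsWithin
        (mem_nhdsWithin_of_mem_nhds (Iic_mem_nhds hy.2))
    exact Filter.mem_of_superset h1 (fun z hz => ⟨le_trans hy.1.le hz.1.le, hz.2⟩)
  · apply ContinuousOn.intervalIntegrable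
    rw [Set.uIcc_of_le hab.le]
    have hin : ContinuousOn (fun y : ℝ => (y, t)) (Set.Icc a b) :=
      (continuous_id.prodMk continuous_const).continuousOn
    exact (g_continuousOn hT hab hφ).comp hin (fun y hy => ⟨hy, ht⟩)


lemma phi_slice_integrable (hab : a < b)
    (hφ : ContDiffOn ℝ 1 (fun p : ℝ × ℝ => φ p.1 p.2) (Set.Icc a b ×ˢ timeDom Tstar))
    {s : ℝ} (hs : s ∈ timeDom Tstar) :
    IntervalIntegrable (fun x => φ x s) MeasureTheory.volume a b := by
  apply ContinuousOn.intervalIntegrable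
  rw [Set.uIcc_of_le hab.le]
  have hin : ContinuousOn (fun y : ℝ => (y, s)) (Set.Icc a b) :=
    (continuous_id.prodMk continuous_const).continuousOn
  exact hφ.continuousOn.comp hin (fun y hy => ⟨hy, hs⟩)

lemma hasDerivWithinAt_integral_phi (hT : 0 < Tstar) (hab : a < b)
    (hφ : ContDiffOn ℝ 1 (fun p : ℝ × ℝ => φ p.1 p.2) (Set.Icc a b ×ˢ timeDom Tstar))
    {t : ℝ} (ht : t ∈ timeDom Tstar) :
    HasDerivWithinAt (fun s => ∫ x in a..b, φ x s)
      (∫ x in a..b, (fderivWithin ℝ (fun p : ℝ × ℝ => φ p.1 p.2)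
        (Set.Icc a b ×ˢ timeDom Tstar) (x, t)) ((0:ℝ),(1:ℝ)))
      (timeDom Tstar) t := by
  set g : ℝ × ℝ → ℝ := fun p =>
    (fderivWithin ℝ (fun p : ℝ × ℝ => φ p.1 p.2) (Set.Icc a b ×ˢ timeDom Tstar) p) ((0:ℝ),(1:ℝ))
    with hg
  obtain ⟨t'', htt'', ht''T⟩ := EReal.exists_between_coe_real ht.2
  set J : Set ℝ := Set.Icc 0 t'' with hJ
  have htt''R : t < t'' := by exact_mod_cast htt''
  have htJ : t ∈ J := ⟨ht.1, htt''R.le⟩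
  have hJsub : J ⊆ timeDom Tstar := fun s hs =>
    ⟨hs.1, lt_of_le_of_lt (by exact_mod_cast hs.2) ht''T⟩
  have hJnhds : J ∈ nhdsWithin t (timeDom Tstar) := by
    have h1 : timeDom Tstar ∩ Set.Iio t'' ∈ nhdsWithin t (timeDom Tstar) :=
      Filter.inter_mem self_mem_nhdsWithin (mem_nhdsWithin_of_mem_nhds (Iio_mem_nhds htt''R))
    exact Filter.mem_of_superset h1 (fun s hs => ⟨hs.1.1, hs.2.le⟩)
  refine HasDerivWithinAt.mono_of_mem_nhdsWithin ?_ hJnhds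
  -- now work within J
  have hRcomp : IsCompact (Set.Icc a b ×ˢ J) := isCompact_Icc.prod isCompact_Icc
  have hgc : ContinuousOn g (Set.Icc a b ×ˢ J) :=
    (g_continuousOn hT hab hφ).mono (Set.prod_mono (le_refl _) hJsub)
  have hunif := hRcomp.uniformContinuousOn_of_continuous hgc
  rw [Metric.uniformContinuousOn_iff] at hunif
  have hder : ∀ x ∈ Set.Icc a b, ∀ s ∈ J, HasDerivWithinAt (fun τ => φ x τ) (g (x, s)) J s :=
    fun x hx s hs => (phi_hasDerivWithinAt_time hφ hx (hJsub hs)).mono hJsub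
  have hgint : IntervalIntegrable (fun x => g (x, t)) MeasureTheory.volume a b := by
    apply ContinuousOn.intervalIntegrable
    rw [Set.uIcc_of_le hab.le]
    have hin : ContinuousOn (fun y : ℝ => (y, t)) (Set.Icc a b) :=
      (continuous_id.prodMk continuous_const).continuousOn
    exact hgc.comp hin (fun y hy => ⟨hy, htJ⟩)
  rw [hasDerivWithinAt_iff_isLittleO, Asymptotics.isLittleO_iff]
  intro c hc
  have hba : (0:ℝ) < b - a := by linarith
  set ε : ℝ := c / (b - a) with hε
  have hεpos : 0 < ε := div_pos hc hba
  obtain ⟨δ, hδpos, hδ⟩ := hunif ε hεpos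
  have hball : J ∩ Metric.ball t δ ∈ nhdsWithin t J :=
    Filter.inter_mem self_mem_nhdsWithin
      (mem_nhdsWithin_of_mem_nhds (Metric.ball_mem_nhds t hδpos))
  filter_upwards [hball] with s hs
  obtain ⟨hsJ, hsball⟩ := hs
  -- pointwise mean value bound
  have key : ∀ x ∈ Set.Icc a b, |φ x s - φ x t - (s - t) * g (x, t)| ≤ ε * |s - t| := by
    intro x hx
    set S' : Set ℝ := J ∩ Metric.ball t δ with hS'
    have hconv : Convex ℝ S' := (convex_Icc 0 t'').inter (convex_ball t δ)
    have hfder : ∀ τ ∈ S', HasDerivWithinAt (fun τ => φ x τ - g (x, t) * τ)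
        (g (x, τ) - g (x, t)) S' τ := by
      intro τ hτ
      have h1 : HasDerivWithinAt (fun τ => φ x τ) (g (x, τ)) S' τ :=
        (hder x hx τ hτ.1).mono Set.inter_subset_left
      have h2 : HasDerivWithinAt (fun τ : ℝ => g (x, t) * τ) (g (x, t)) S' τ := by
        simpa using (hasDerivWithinAt_id τ S').const_mul (g (x, t))
      exact h1.sub h2
    have hbound : ∀ τ ∈ S', ‖g (x, τ) - g (x, t)‖ ≤ ε := by
      intro τ hτ
      have hd : dist ((x, τ) : ℝ × ℝ) ((x, t) : ℝ × ℝ) < δ := by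
        rw [Prod.dist_eq]
        simp only [dist_self]
        rw [max_lt_iff]
        constructor
        · exact hδpos
        · exact Metric.mem_ball.mp hτ.2
      have := hδ (x, τ) ⟨hx, hτ.1⟩ (x, t) ⟨hx, htJ⟩ hd
      rw [Real.dist_eq] at this
      exact this.le
    have := hconv.norm_image_sub_le_of_norm_hasDerivWithin_le hfder hbound
      ⟨htJ, Metric.mem_ball_self hδpos⟩ ⟨hsJ, hsball⟩
    rw [Real.norm_eq_abs, Real.norm_eq_abs] at this
    calc |φ x s - φ x t - (s - t) * g (x, t)|
        = |(φ x s - g (x, t) * s) - (φ x t - g (x, t) * t)| := by ring_nf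
      _ ≤ ε * |s - t| := this
  -- integrate the bound
  have hint_s := phi_slice_integrable hab hφ (hJsub hsJ)
  have hint_t := phi_slice_integrable hab hφ (hJsub htJ)
  have heq : (∫ x in a..b, φ x s) - (∫ x in a..b, φ x t) - (s - t) • (∫ x in a..b, g (x, t))
      = ∫ x in a..b, (φ x s - φ x t - (s - t) * g (x, t)) := by
    rw [smul_eq_mul, ← intervalIntegral.integral_const_mul,
      ← intervalIntegral.integral_sub hint_s hint_t,
      ← intervalIntegral.integral_sub (hint_s.sub hint_t) (hgint.const_mul (s - t))]
  rw [heq]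
  have hnorm := intervalIntegral.norm_integral_le_of_norm_le_const
    (C := ε * |s - t|) (f := fun x => φ x s - φ x t - (s - t) * g (x, t)) (a := a) (b := b) ?_
  · calc ‖∫ x in a..b, (φ x s - φ x t - (s - t) * g (x, t))‖
        ≤ ε * |s - t| * |b - a| := hnorm
      _ = c * ‖s - t‖ := by
          rw [abs_of_pos hba, Real.norm_eq_abs, hε]
          field_simp
  · intro x hx
    have hx' : x ∈ Set.Icc a b := by
      rw [Set.uIoc_of_le hab.le] at hx
      exact ⟨hx.1.le, hx.2⟩
    rw [Real.norm_eq_abs]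
    exact key x hx'


end


/-- Let `q, ψ : ℝ² × [0,T*) → ℝ` be `C¹` with `∂ₜ q + ∇^⊥ψ · ∇ₓ q = 0`.
Let `φ₁, φ₂ : [a,b] × [0,T*) → ℝ` be `C¹` graph parameterizations of two level curves of `q`,
with `∂q/∂x₂ ≠ 0` along both curves. Then for every `t ∈ [0,T*)`,
`d/dt ∫_a^b [φ₂(x₁,t) - φ₁(x₁,t)] dx₁
  = ψ(b, φ₂(b,t), t) - ψ(a, φ₂(a,t), t) + ψ(a, φ₁(a,t), t) - ψ(b, φ₁(b,t), t)`. -/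
theorem area_between_level_curves_derivative
    (Tstar : EReal) (hT : 0 < Tstar)
    (q ψ : EuclideanSpace ℝ (Fin 2) → ℝ → ℝ)
    (hq : ContDiffOn ℝ 1 (fun p : EuclideanSpace ℝ (Fin 2) × ℝ => q p.1 p.2)
      (Set.univ ×ˢ timeDom Tstar))
    (hψ : ContDiffOn ℝ 1 (fun p : EuclideanSpace ℝ (Fin 2) × ℝ => ψ p.1 p.2)
      (Set.univ ×ˢ timeDom Tstar))
    (htransport : ∀ (x : EuclideanSpace ℝ (Fin 2)), ∀ t ∈ timeDom Tstar,
      derivWithin (fun s => q x s) (timeDom Tstar) t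
        + (-(fderiv ℝ (fun z => ψ z t) x (EuclideanSpace.single 1 1)))
            * fderiv ℝ (fun z => q z t) x (EuclideanSpace.single 0 1)
        + (fderiv ℝ (fun z => ψ z t) x (EuclideanSpace.single 0 1))
            * fderiv ℝ (fun z => q z t) x (EuclideanSpace.single 1 1) = 0)
    (a b : ℝ) (hab : a < b)
    (φ₁ φ₂ : ℝ → ℝ → ℝ)
    (hφ₁ : ContDiffOn ℝ 1 (fun p : ℝ × ℝ => φ₁ p.1 p.2) (Set.Icc a b ×ˢ timeDom Tstar))
    (hφ₂ : ContDiffOn ℝ 1 (fun p : ℝ × ℝ => φ₂ p.1 p.2) (Set.Icc a b ×ˢ timeDom Tstar))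
    (K₁ K₂ : ℝ)
    (hlevel₁ : ∀ x₁ ∈ Set.Icc a b, ∀ t ∈ timeDom Tstar, q (pt x₁ (φ₁ x₁ t)) t = K₁)
    (hlevel₂ : ∀ x₁ ∈ Set.Icc a b, ∀ t ∈ timeDom Tstar, q (pt x₁ (φ₂ x₁ t)) t = K₂)
    (hnondeg₁ : ∀ x₁ ∈ Set.Icc a b, ∀ t ∈ timeDom Tstar,
      fderiv ℝ (fun z => q z t) (pt x₁ (φ₁ x₁ t)) (EuclideanSpace.single 1 1) ≠ 0)
    (hnondeg₂ : ∀ x₁ ∈ Set.Icc a b, ∀ t ∈ timeDom Tstar,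
      fderiv ℝ (fun z => q z t) (pt x₁ (φ₂ x₁ t)) (EuclideanSpace.single 1 1) ≠ 0) :
    ∀ t ∈ timeDom Tstar,
      HasDerivWithinAt (fun s => ∫ x₁ in a..b, (φ₂ x₁ s - φ₁ x₁ s))
        (ψ (pt b (φ₂ b t)) t - ψ (pt a (φ₂ a t)) t
          + ψ (pt a (φ₁ a t)) t - ψ (pt b (φ₁ b t)) t)
        (timeDom Tstar) t := by
  intro t ht
  have h2 := hasDerivWithinAt_integral_phi hT hab hφ₂ ht
  have h1 := hasDerivWithinAt_integral_phi hT hab hφ₁ ht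
  rw [integral_g_eq hT hq hψ htransport hab hφ₂ hlevel₂ hnondeg₂ ht] at h2
  rw [integral_g_eq hT hq hψ htransport hab hφ₁ hlevel₁ hnondeg₁ ht] at h1
  have hsub := h2.sub h1
  have heq : ∀ s ∈ timeDom Tstar,
      (∫ x₁ in a..b, (φ₂ x₁ s - φ₁ x₁ s))
        = (∫ x₁ in a..b, φ₂ x₁ s) - ∫ x₁ in a..b, φ₁ x₁ s := fun s hs =>
    intervalIntegral.integral_sub (phi_slice_integrable hab hφ₂ hs)
      (phi_slice_integrable hab hφ₁ hs)
  have h := hsub.congr heq (heq t ht)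
  exact h.congr_deriv (by ring)
end
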